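/- arXiv:1405.2011 — 2 statements merged into one kernel-verified Lean document; each statement's English description precedes it below -/
import Mathlib

section
/- In the pipelined convergecast analysis: if each non-root node u in a rooted tree must send m_u messages to its parent, sends one unsent message per round whenever available, and d_u denotes the depth of the subtree rooted at u, then after r rounds node u has forwarded min(r − d_u, m_u) messages (where messages available to u include its own plus those received from children). -/
/-!
Induction on the subtree height `dep u`, and inside it on the round `r`. In a round where `u`
sends, the bound grows by at most one while `sent u` grows by one. In a round where `u` is idle,
it has already forwarded everything it holds, i.e. its own messages plus what its children sent;
each child `v` has sent at least `min (r - dep v) (mm v) ≥ min (r + 1 - dep u) (mm v)` by the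
outer induction, and `min K (∑ mm v) ≤ ∑ min K (mm v)` for `K = r + 1 - dep u`.
-/

open Finset

theorem min_sum_le_sum_min {ι M : Type*} [AddCommMonoid M] [LinearOrder M]
    [CanonicallyOrderedAdd M] [IsOrderedAddMonoid M] (s : Finset ι) (f : ι → M) (K : M) :
    min K (∑ i ∈ s, f i) ≤ ∑ i ∈ s, min K (f i) := by
  by_cases hbig : ∃ i ∈ s, K ≤ f i
  · obtain ⟨i, hi, hKi⟩ := hbig
    calc min K (∑ i ∈ s, f i) ≤ min K (f i) :=
          le_min (min_le_left _ _) ((min_le_left _ _).trans hKi)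
      _ ≤ ∑ i ∈ s, min K (f i) :=
          single_le_sum (f := fun i => min K (f i)) (fun _ _ => zero_le) hi
  · push Not at hbig
    rw [sum_congr rfl fun i hi => min_eq_right (hbig i hi).le]
    exact min_le_right _ _

theorem min_sub_le_sent_of_children {V : Type*} (children : V → Finset V) (dep own mm : V → ℕ)
    (sent : V → ℕ → ℕ) (u : V) (hdep : ∀ v ∈ children u, dep v < dep u)
    (hm : mm u = own u + ∑ v ∈ children u, mm v)
    (hmono : ∀ r, sent u r ≤ sent u (r + 1))
    (havail : ∀ r, sent u (r + 1) = sent u r + 1 ∨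
      own u + ∑ v ∈ children u, sent v r ≤ sent u r)
    (hchildren : ∀ v ∈ children u, ∀ r, min (r - dep v) (mm v) ≤ sent v r) :
    ∀ r, min (r - dep u) (mm u) ≤ sent u r := by
  intro r
  induction r with
  | zero => simp
  | succ r ih =>
    rcases havail r with hsend | hidle
    · omega
    · set K := r + 1 - dep u
      calc min K (mm u) ≤ own u + min K (∑ v ∈ children u, mm v) := by rw [hm]; omega
        _ ≤ own u + ∑ v ∈ children u, min K (mm v) := by
          gcongr; exact min_sum_le_sum_min _ _ _
        _ ≤ own u + ∑ v ∈ children u, sent v r := by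
          gcongr with v hv
          exact (min_le_min_right _ (by have := hdep v hv; omega)).trans (hchildren v hv r)
        _ ≤ sent u (r + 1) := hidle.trans (hmono r)

theorem pipelined_convergecast_general {V : Type*}
    (children : V → Finset V) (dep : V → ℕ)
    (hdep : ∀ u, ∀ v ∈ children u, dep v < dep u)
    (own mm : V → ℕ)
    (hm : ∀ u, mm u = own u + ∑ v ∈ children u, mm v)
    (sent : V → ℕ → ℕ)
    (hmono : ∀ u r, sent u r ≤ sent u (r + 1))
    (havail : ∀ u r, sent u (r + 1) = sent u r + 1 ∨
      own u + ∑ v ∈ children u, sent v r ≤ sent u r) :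
    ∀ u r, min (r - dep u) (mm u) ≤ sent u r := by
  suffices h : ∀ n, ∀ u, dep u = n → ∀ r, min (r - dep u) (mm u) ≤ sent u r from
    fun u => h _ u rfl
  intro n
  induction n using Nat.strong_induction_on with
  | _ n ih =>
    rintro u rfl
    exact min_sub_le_sent_of_children children dep own mm sent u (hdep u) (hm u) (hmono u)
      (havail u) fun v hv => ih _ (hdep u v hv) v rfl

/-- Pipelined convergecast: in a rooted tree (children of `u` have smaller subtree
height `dep`), each node `u` must eventually send `mm u = own u + ∑_{v child} mm v`
messages to its parent; it sends one message per round whenever it still holds an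
unsent message. Then after `r` rounds, `u` has sent at least `min(r − dep u, mm u)`
messages. -/
theorem pipelined_convergecast {V : Type*} [DecidableEq V]
    (children : V → Finset V) (dep : V → ℕ)
    (hdep : ∀ u, ∀ v ∈ children u, dep v < dep u)
    (own mm : V → ℕ)
    (hm : ∀ u, mm u = own u + ∑ v ∈ children u, mm v)
    (sent : V → ℕ → ℕ)
    (hsent0 : ∀ u, sent u 0 = 0)
    (hmono : ∀ u r, sent u r ≤ sent u (r + 1))
    (hstep : ∀ u r, sent u (r + 1) ≤ sent u r + 1)
    (havail : ∀ u r, sent u (r + 1) = sent u r + 1 ∨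
      own u + ∑ v ∈ children u, sent v r ≤ sent u r)
    (hcap : ∀ u r, sent u r ≤ own u + ∑ v ∈ children u, sent v r) :
    ∀ u r, min (r - dep u) (mm u) ≤ sent u r :=
  pipelined_convergecast_general children dep hdep own mm hm sent hmono havail
end

section
/- A matroid/pipelining bound: convergecasting k forest edges over a BFS tree of depth D, where each node forwards one edge per round and discards cycle-closing edges, terminates in at most D + k rounds. -/
/-!
Every node `u` forwards all `mm u` of its surviving items by round `dep u + mm u`. By
induction on the round `t`, node `u` has forwarded at least `min (mm u) (t - dep u)` items:
in a round where it cannot forward, it has already sent everything it holds, and each child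
`v` (with `dep v < dep u`) has by then forwarded `min (mm v) (t - dep v)` items, which
together with its own items is at least `min (mm u) (t + 1 - dep u)`. Since a node never
forwards more than it has received, the children of the root are done by round `D + k`.
-/

theorem Nat.min_add_sum_le_add_sum_min {ι : Type*} (s : Finset ι) (a c : ℕ) (f : ι → ℕ) :
    min (a + ∑ i ∈ s, f i) c ≤ a + ∑ i ∈ s, min (f i) c := by
  by_cases hf : ∀ i ∈ s, f i ≤ c
  · rw [Finset.sum_congr rfl fun i hi => min_eq_left (hf i hi)]
    exact min_le_left _ _
  · push Not at hf
    obtain ⟨i, hi, hci⟩ := hf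
    calc min (a + ∑ i ∈ s, f i) c ≤ min (f i) c := by
          rw [min_eq_right hci.le]; exact min_le_right _ _
      _ ≤ ∑ i ∈ s, min (f i) c :=
        Finset.single_le_sum (f := fun i => min (f i) c) (by simp) hi
      _ ≤ a + ∑ i ∈ s, min (f i) c := Nat.le_add_left _ _

section Convergecast

variable {V : Type*} (children : V → Finset V) (dep : V → ℕ)
  (hdep : ∀ u, ∀ v ∈ children u, dep v < dep u)
  (own mm : V → ℕ) (hm : ∀ u, mm u = own u + ∑ v ∈ children u, mm v)
  (sent : V → ℕ → ℕ)

include hdep hm in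
theorem sent_le_total (hcap : ∀ u r, sent u r ≤ own u + ∑ v ∈ children u, sent v r)
    (u : V) (r : ℕ) : sent u r ≤ mm u := by
  induction hu : dep u using Nat.strong_induction_on generalizing u with
  | _ n ih =>
    calc sent u r ≤ own u + ∑ v ∈ children u, sent v r := hcap u r
      _ ≤ own u + ∑ v ∈ children u, mm v := by
        gcongr with v hv
        exact ih (dep v) (hu ▸ hdep u v hv) v rfl
      _ = mm u := (hm u).symm

include hdep hm in
theorem min_total_sub_dep_le_sent (hmono : ∀ u r, sent u r ≤ sent u (r + 1))
    (havail : ∀ u r, sent u (r + 1) = sent u r + 1 ∨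
      own u + ∑ v ∈ children u, sent v r ≤ sent u r)
    (t : ℕ) (u : V) : min (mm u) (t - dep u) ≤ sent u t := by
  induction t generalizing u with
  | zero => simp
  | succ t ih =>
    rcases havail u t with hadvance | hblocked
    · have := ih u
      omega
    · calc min (mm u) (t + 1 - dep u)
          ≤ own u + ∑ v ∈ children u, min (mm v) (t + 1 - dep u) := by
            rw [hm u]
            exact Nat.min_add_sum_le_add_sum_min _ _ _ _
        _ ≤ own u + ∑ v ∈ children u, sent v t := by
            gcongr with v hv
            have := ih v
            have := hdep u v hv
            omega
        _ ≤ sent u t := hblocked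
        _ ≤ sent u (t + 1) := hmono u t

end Convergecast

theorem filtered_convergecast_time_general {V : Type*}
    (children : V → Finset V) (dep : V → ℕ)
    (hdep : ∀ u, ∀ v ∈ children u, dep v < dep u)
    (own mm : V → ℕ)
    (hm : ∀ u, mm u = own u + ∑ v ∈ children u, mm v)
    (sent : V → ℕ → ℕ)
    (hmono : ∀ u r, sent u r ≤ sent u (r + 1))
    (havail : ∀ u r, sent u (r + 1) = sent u r + 1 ∨
      own u + ∑ v ∈ children u, sent v r ≤ sent u r)
    (hcap : ∀ u r, sent u r ≤ own u + ∑ v ∈ children u, sent v r)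
    (R : V) (D k : ℕ) (hR : dep R ≤ D) (hk : ∀ u, mm u ≤ k) :
    own R + ∑ v ∈ children R, sent v (D + k) = mm R := by
  have hdone : ∀ v ∈ children R, sent v (D + k) = mm v := by
    intro v hv
    have hlower := min_total_sub_dep_le_sent children dep hdep own mm hm sent hmono havail
      (D + k) v
    have hupper := sent_le_total children dep hdep own mm hm sent hcap v (D + k)
    have := hdep R v hv
    have := hk v
    omega
  rw [hm R, Finset.sum_congr rfl hdone]

/-- Pipelined filtered convergecast over a BFS tree of depth `D`: if at most `k`
items survive filtering at every node and each node forwards one available item per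
round, then within `D + k` rounds the root `R` has received all `mm R` surviving
items. -/
theorem filtered_convergecast_time {V : Type*} [DecidableEq V]
    (children : V → Finset V) (dep : V → ℕ)
    (hdep : ∀ u, ∀ v ∈ children u, dep v < dep u)
    (own mm : V → ℕ)
    (hm : ∀ u, mm u = own u + ∑ v ∈ children u, mm v)
    (sent : V → ℕ → ℕ)
    (hsent0 : ∀ u, sent u 0 = 0)
    (hmono : ∀ u r, sent u r ≤ sent u (r + 1))
    (hstep : ∀ u r, sent u (r + 1) ≤ sent u r + 1)
    (havail : ∀ u r, sent u (r + 1) = sent u r + 1 ∨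
      own u + ∑ v ∈ children u, sent v r ≤ sent u r)
    (hcap : ∀ u r, sent u r ≤ own u + ∑ v ∈ children u, sent v r)
    (R : V) (D k : ℕ) (hR : dep R ≤ D) (hk : ∀ u, mm u ≤ k) :
    own R + ∑ v ∈ children R, sent v (D + k) = mm R :=
  filtered_convergecast_time_general children dep hdep own mm hm sent hmono havail hcap R D k hR hk
end
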